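/- (Lemma 2) For any secure aggregation scheme for (F, G) and any user index u ∈ {1, …, K} such that the u-th column of F is nonzero, the conditional entropy of that user's message given all other users' inputs and keys satisfies H[X_u | ((row k of W, Z_k))_{k ≠ u}] ≥ L · log q. -/
import Mathlib


/-!
Shannon entropy machinery for finitely-supported random variables on a finite
probability space, and the definition of a vector-linear secure aggregation
scheme (Yuan–Sun, "Vector Linear Secure Aggregation").
-/

open scoped BigOperators Classical

namespace SecAgg

noncomputable section

variable {Ω : Type*} [Fintype Ω]

/-- Probability that the random variable `X` takes the value `a`, under the
probability mass function `p` on the finite sample space `Ω`. -/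
def pr {α : Type*} (p : Ω → ℝ) (X : Ω → α) (a : α) : ℝ :=
  ∑ ω, if X ω = a then p ω else 0

/-- Shannon entropy (natural-log units) of a random variable `X` on a finite
probability space with mass function `p`. -/
def H {α : Type*} (p : Ω → ℝ) (X : Ω → α) : ℝ :=
  ∑ a ∈ Finset.univ.image X, Real.negMulLog (pr p X a)

/-- Conditional Shannon entropy `H[X | Y] = H[(X,Y)] - H[Y]`. -/
def Hc {α β : Type*} (p : Ω → ℝ) (X : Ω → α) (Y : Ω → β) : ℝ :=
  H p (fun ω => (X ω, Y ω)) - H p Y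

/-- Mutual information `I[X : Y] = H[X] + H[Y] - H[(X,Y)]`. -/
def MI {α β : Type*} (p : Ω → ℝ) (X : Ω → α) (Y : Ω → β) : ℝ :=
  H p X + H p Y - H p (fun ω => (X ω, Y ω))

/-- Conditional mutual information
`I[X : Y | Z] = H[(X,Z)] + H[(Y,Z)] - H[(X,Y,Z)] - H[Z]`. -/
def CMI {α β γ : Type*} (p : Ω → ℝ) (X : Ω → α) (Y : Ω → β) (Z : Ω → γ) : ℝ :=
  H p (fun ω => (X ω, Z ω)) + H p (fun ω => (Y ω, Z ω))
    - H p (fun ω => (X ω, Y ω, Z ω)) - H p Z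

/-- A secure aggregation scheme for the pair of linear maps `(F, G)`:
`K` users, inputs of length `L` over the finite field `𝔽`; the server must
learn `F * W` and nothing more about `G * W`.  `κ k` is the alphabet of
user `k`'s key, `σ` the alphabet of the source key, `χ k` the alphabet of
user `k`'s message. -/
structure Scheme (𝔽 : Type) [Field 𝔽] [Fintype 𝔽] (L : ℕ) {K M N : ℕ}
    (F : Matrix (Fin M) (Fin K) 𝔽) (G : Matrix (Fin N) (Fin K) 𝔽)
    (Ω : Type) [Fintype Ω] (κ : Fin K → Type) (σ : Type) (χ : Fin K → Type) where
  /-- probability mass function on the sample space -/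
  p : Ω → ℝ
  p_nonneg : ∀ ω, 0 ≤ p ω
  p_sum_one : ∑ ω, p ω = 1
  /-- the input, a `K × L` matrix of field elements (row `k` is user `k`'s input) -/
  W : Ω → Matrix (Fin K) (Fin L) 𝔽
  /-- user `k`'s key -/
  Z : ∀ k : Fin K, Ω → κ k
  /-- the source key -/
  Zsrc : Ω → σ
  /-- user `k`'s message -/
  X : ∀ k : Fin K, Ω → χ k
  /-- the input is uniformly distributed -/
  W_unif : ∀ w : Matrix (Fin K) (Fin L) 𝔽,
    pr p W w = (Fintype.card (Matrix (Fin K) (Fin L) 𝔽) : ℝ)⁻¹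
  /-- the input is independent of all keys (including the source key) -/
  indep : ∀ (w : Matrix (Fin K) (Fin L) 𝔽) (z : (∀ k, κ k) × σ),
    pr p (fun ω => (W ω, ((fun k => Z k ω), Zsrc ω))) (w, z)
      = pr p W w * pr p (fun ω => ((fun k => Z k ω), Zsrc ω)) z
  /-- each key is a deterministic function of the source key -/
  Z_det : ∀ k : Fin K, ∃ f : σ → κ k, ∀ ω, Z k ω = f (Zsrc ω)
  /-- each message is a deterministic function of (own input row, own key) -/
  X_det : ∀ k : Fin K, ∃ f : (Fin L → 𝔽) → κ k → χ k, ∀ ω, X k ω = f (W ω k) (Z k ω)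
  /-- correctness: `F ⬝ W` is determined by the messages -/
  correct : Hc p (fun ω => F * W ω) (fun ω k => X k ω) = 0
  /-- security: the messages reveal nothing about `G ⬝ W` beyond `F ⬝ W` -/
  secure : CMI p (fun ω => G * W ω) (fun ω k => X k ω) (fun ω => F * W ω) = 0

end

end SecAgg
namespace SecAgg

section ToolboxOuter

variable {Ω : Type*} [Fintype Ω]

section Toolbox

variable {α β γ : Type*} (p : Ω → ℝ)

lemma pr_nonneg (hp : ∀ ω, 0 ≤ p ω) (X : Ω → α) (a : α) : 0 ≤ pr p X a :=
  Finset.sum_nonneg fun ω _ => by by_cases h : X ω = a <;> simp [h, hp ω]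

lemma pr_eq_zero (X : Ω → α) (a : α) (h : ∀ ω, X ω ≠ a) : pr p X a = 0 :=
  Finset.sum_eq_zero fun ω _ => if_neg (h ω)

lemma le_pr (hp : ∀ ω, 0 ≤ p ω) (X : Ω → α) (ω : Ω) : p ω ≤ pr p X (X ω) := by
  classical
  have h1 : p ω = ∑ ω' ∈ ({ω} : Finset Ω), (if X ω' = X ω then p ω' else 0) := by simp
  rw [h1]
  exact Finset.sum_le_sum_of_subset_of_nonneg (by simp)
    (fun ω' _ _ => by by_cases h : X ω' = X ω <;> simp [h, hp ω'])

lemma H_eq_sum (X : Ω → α) (s : Finset α) (hs : ∀ ω, X ω ∈ s) :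
    H p X = ∑ a ∈ s, Real.negMulLog (pr p X a) := by
  refine Finset.sum_subset ?_ ?_
  · intro a ha
    obtain ⟨ω, _, rfl⟩ := Finset.mem_image.1 ha
    exact hs ω
  · intro a _ ha
    rw [pr_eq_zero p X a fun ω hω => ha (Finset.mem_image.2 ⟨ω, Finset.mem_univ ω, hω⟩),
      Real.negMulLog_zero]

lemma ite_iff {c d : Prop} {h1 : Decidable c} {h2 : Decidable d} {x y : ℝ} (hcd : c ↔ d) :
    (@ite _ c h1 x y) = (@ite _ d h2 x y) := by
  have he := propext hcd
  subst he
  rw [Subsingleton.elim h1 h2]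

lemma pair_eq_iff {α β : Type*} (x : α × β) (a : α) (b : β) :
    x = (a, b) ↔ x.1 = a ∧ x.2 = b := by
  constructor
  · rintro rfl; exact ⟨rfl, rfl⟩
  · rintro ⟨h1, h2⟩; exact Prod.ext h1 h2

lemma pr_sum (X : Ω → α) (s : Finset α) (hs : ∀ ω, X ω ∈ s) :
    ∑ a ∈ s, pr p X a = ∑ ω, p ω := by
  calc ∑ a ∈ s, pr p X a
      = ∑ a ∈ s, ∑ ω, (if X ω = a then p ω else 0) := rfl
    _ = ∑ ω, ∑ a ∈ s, (if X ω = a then p ω else 0) := Finset.sum_comm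
    _ = ∑ ω, p ω := Finset.sum_congr rfl fun ω _ => by
        refine (Finset.sum_eq_single (X ω)
          (fun b _ hb => if_neg fun hc => hb hc.symm)
          (fun h => absurd (hs ω) h)).trans (if_pos rfl)

lemma pr_map (X : Ω → α) (g : α → β) (s : Finset α) (hs : ∀ ω, X ω ∈ s) (y : β) :
    pr p (fun ω => g (X ω)) y = ∑ a ∈ s, if g a = y then pr p X a else 0 := by
  have key1 : ∀ ω, (if g (X ω) = y then p ω else 0)
      = ∑ a ∈ s, (if X ω = a ∧ g a = y then p ω else 0) := by
    intro ω
    refine Eq.symm ((Finset.sum_eq_single (X ω)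
      (fun b _ hb => if_neg fun hc => hb hc.1.symm)
      (fun h => absurd (hs ω) h)).trans ?_)
    by_cases h : g (X ω) = y
    · rw [if_pos ⟨rfl, h⟩, if_pos h]
    · rw [if_neg (fun hc => h hc.2), if_neg h]
  calc pr p (fun ω => g (X ω)) y
      = ∑ ω, (if g (X ω) = y then p ω else 0) := rfl
    _ = ∑ ω, ∑ a ∈ s, (if X ω = a ∧ g a = y then p ω else 0) :=
        Finset.sum_congr rfl fun ω _ => key1 ω
    _ = ∑ a ∈ s, ∑ ω, (if X ω = a ∧ g a = y then p ω else 0) := Finset.sum_comm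
    _ = ∑ a ∈ s, (if g a = y then pr p X a else 0) := by
        refine Finset.sum_congr rfl fun a _ => ?_
        by_cases h : g a = y
        · rw [if_pos h]
          exact Finset.sum_congr rfl fun ω _ => ite_iff (and_iff_left h)
        · rw [if_neg h]
          exact Finset.sum_eq_zero fun ω _ => if_neg fun hc => h hc.2

lemma pr_marginal (A : Ω → α) (B : Ω → β) (s : Finset α) (hs : ∀ ω, A ω ∈ s) (b : β) :
    pr p B b = ∑ a ∈ s, pr p (fun ω => (A ω, B ω)) (a, b) := by
  have key1 : ∀ ω, (if B ω = b then p ω else 0)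
      = ∑ a ∈ s, (if A ω = a ∧ B ω = b then p ω else 0) := by
    intro ω
    refine Eq.symm ((Finset.sum_eq_single (A ω)
      (fun c _ hc => if_neg fun h => hc h.1.symm)
      (fun h => absurd (hs ω) h)).trans ?_)
    by_cases h : B ω = b
    · rw [if_pos ⟨rfl, h⟩, if_pos h]
    · rw [if_neg (fun hc => h hc.2), if_neg h]
  calc pr p B b
      = ∑ ω, (if B ω = b then p ω else 0) := rfl
    _ = ∑ ω, ∑ a ∈ s, (if A ω = a ∧ B ω = b then p ω else 0) :=
        Finset.sum_congr rfl fun ω _ => key1 ω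
    _ = ∑ a ∈ s, ∑ ω, (if A ω = a ∧ B ω = b then p ω else 0) := Finset.sum_comm
    _ = ∑ a ∈ s, pr p (fun ω => (A ω, B ω)) (a, b) :=
        Finset.sum_congr rfl fun a _ => Eq.symm
          (show pr p (fun ω => (A ω, B ω)) (a, b)
              = ∑ ω, (if A ω = a ∧ B ω = b then p ω else 0) from
            Finset.sum_congr rfl fun ω _ => ite_iff (pair_eq_iff _ _ _))

lemma pr_pair_comp_snd (A : Ω → α) (B : Ω → β) (g : β → γ)
    (s : Finset β) (hs : ∀ ω, B ω ∈ s) (a : α) (c : γ) :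
    pr p (fun ω => (A ω, g (B ω))) (a, c)
      = ∑ b ∈ s, if g b = c then pr p (fun ω => (A ω, B ω)) (a, b) else 0 := by
  have key1 : ∀ ω, (if A ω = a ∧ g (B ω) = c then p ω else 0)
      = ∑ b ∈ s, (if B ω = b ∧ A ω = a ∧ g b = c then p ω else 0) := by
    intro ω
    refine Eq.symm ((Finset.sum_eq_single (B ω)
      (fun d _ hd => if_neg fun hc => hd hc.1.symm)
      (fun h => absurd (hs ω) h)).trans ?_)
    by_cases h : A ω = a ∧ g (B ω) = c
    · rw [if_pos ⟨rfl, h⟩, if_pos h]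
    · rw [if_neg (fun hc => h hc.2), if_neg h]
  calc pr p (fun ω => (A ω, g (B ω))) (a, c)
      = ∑ ω, (if A ω = a ∧ g (B ω) = c then p ω else 0) :=
        Finset.sum_congr rfl fun ω _ => ite_iff (pair_eq_iff _ _ _)
    _ = ∑ ω, ∑ b ∈ s, (if B ω = b ∧ A ω = a ∧ g b = c then p ω else 0) :=
        Finset.sum_congr rfl fun ω _ => key1 ω
    _ = ∑ b ∈ s, ∑ ω, (if B ω = b ∧ A ω = a ∧ g b = c then p ω else 0) := Finset.sum_comm
    _ = ∑ b ∈ s, (if g b = c then pr p (fun ω => (A ω, B ω)) (a, b) else 0) := by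
        refine Finset.sum_congr rfl fun b _ => ?_
        by_cases h : g b = c
        · rw [if_pos h]
          refine Eq.symm (Finset.sum_congr rfl fun ω _ => ite_iff ?_)
          rw [pair_eq_iff]
          constructor
          · rintro ⟨h1, h2⟩; exact ⟨h2, h1, h⟩
          · rintro ⟨h1, h2, _⟩; exact ⟨h2, h1⟩
        · rw [if_neg h]
          exact Finset.sum_eq_zero fun ω _ => if_neg fun hc => h hc.2.2

end Toolbox
section Toolbox2

variable {α β γ : Type*} (p : Ω → ℝ)

open Real

lemma negMulLog_sum_identity {ι : Type*} (s : Finset ι) (f : ι → ℝ) :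
    ∑ i ∈ s, Real.negMulLog (f i) - Real.negMulLog (∑ i ∈ s, f i)
      = ∑ i ∈ s, f i * (Real.log (∑ j ∈ s, f j) - Real.log (f i)) := by
  simp only [Real.negMulLog, mul_sub, Finset.sum_sub_distrib, ← Finset.sum_mul, neg_mul,
    Finset.sum_neg_distrib]
  ring

lemma negMulLog_term_nonneg {ι : Type*} (s : Finset ι) (f : ι → ℝ) (hf : ∀ i ∈ s, 0 ≤ f i)
    {i : ι} (hi : i ∈ s) : 0 ≤ f i * (Real.log (∑ j ∈ s, f j) - Real.log (f i)) := by
  rcases (hf i hi).eq_or_lt with h | h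
  · simp [← h]
  · have hle : f i ≤ ∑ j ∈ s, f j := Finset.single_le_sum hf hi
    have := Real.log_le_log h hle
    nlinarith

lemma negMulLog_sum_le {ι : Type*} (s : Finset ι) (f : ι → ℝ) (hf : ∀ i ∈ s, 0 ≤ f i) :
    Real.negMulLog (∑ i ∈ s, f i) ≤ ∑ i ∈ s, Real.negMulLog (f i) := by
  have h1 := negMulLog_sum_identity s f
  have h2 : 0 ≤ ∑ i ∈ s, f i * (Real.log (∑ j ∈ s, f j) - Real.log (f i)) :=
    Finset.sum_nonneg fun i hi => negMulLog_term_nonneg s f hf hi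
  linarith

lemma negMulLog_sum_eq {ι : Type*} (s : Finset ι) (f : ι → ℝ) (hf : ∀ i ∈ s, 0 ≤ f i)
    (heq : ∑ i ∈ s, Real.negMulLog (f i) = Real.negMulLog (∑ i ∈ s, f i))
    {i j : ι} (hi : i ∈ s) (hj : j ∈ s) (hij : i ≠ j) (hfi : f i ≠ 0) : f j = 0 := by
  by_contra hfj
  have hpi : 0 < f i := (hf i hi).lt_of_ne (Ne.symm hfi)
  have hpj : 0 < f j := (hf j hj).lt_of_ne (Ne.symm hfj)
  have h1 := negMulLog_sum_identity s f
  have hzero : ∀ k ∈ s, f k * (Real.log (∑ j ∈ s, f j) - Real.log (f k)) = 0 := by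
    refine (Finset.sum_eq_zero_iff_of_nonneg
      (fun k hk => negMulLog_term_nonneg s f hf hk)).1 ?_
    linarith
  have hsub : f i + f j ≤ ∑ k ∈ s, f k := by
    have h2 : ∑ k ∈ ({i, j} : Finset ι), f k ≤ ∑ k ∈ s, f k := by
      refine Finset.sum_le_sum_of_subset_of_nonneg ?_ (fun k hk _ => hf k hk)
      intro k hk
      rcases Finset.mem_insert.1 hk with rfl | hk
      · exact hi
      · rw [Finset.mem_singleton.1 hk]; exact hj
    rwa [Finset.sum_pair hij] at h2
  have hlt : f i < ∑ k ∈ s, f k := by linarith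
  have hlog : Real.log (f i) < Real.log (∑ k ∈ s, f k) := Real.log_lt_log hpi hlt
  have := hzero i hi
  nlinarith

lemma H_comp_le (hp : ∀ ω, 0 ≤ p ω) (X : Ω → α) (g : α → β) :
    H p (fun ω => g (X ω)) ≤ H p X := by
  classical
  set sX := Finset.univ.image X with hsX
  set sY := Finset.univ.image (fun ω => g (X ω)) with hsY
  have hmemX : ∀ ω, X ω ∈ sX := fun ω => Finset.mem_image_of_mem X (Finset.mem_univ ω)
  have h1 : H p (fun ω => g (X ω))
      = ∑ y ∈ sY, Real.negMulLog (∑ a ∈ sX, if g a = y then pr p X a else 0) := by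
    rw [H]
    exact Finset.sum_congr rfl fun y _ => by rw [pr_map p X g sX hmemX y]
  have h2 : ∀ y ∈ sY, Real.negMulLog (∑ a ∈ sX, if g a = y then pr p X a else 0)
      ≤ ∑ a ∈ sX, (if g a = y then Real.negMulLog (pr p X a) else 0) := by
    intro y _
    refine (negMulLog_sum_le sX _ (fun a _ => ?_)).trans_eq ?_
    · split
      · exact pr_nonneg p hp X a
      · exact le_refl 0
    · refine Finset.sum_congr rfl fun a _ => ?_
      split <;> simp [Real.negMulLog_zero]
  calc H p (fun ω => g (X ω))
      ≤ ∑ y ∈ sY, ∑ a ∈ sX, (if g a = y then Real.negMulLog (pr p X a) else 0) := by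
        rw [h1]; exact Finset.sum_le_sum h2
    _ = ∑ a ∈ sX, ∑ y ∈ sY, (if g a = y then Real.negMulLog (pr p X a) else 0) :=
        Finset.sum_comm
    _ = ∑ a ∈ sX, Real.negMulLog (pr p X a) := by
        refine Finset.sum_congr rfl fun a ha => ?_
        have hga : g a ∈ sY := by
          obtain ⟨ω, _, rfl⟩ := Finset.mem_image.1 ha
          exact Finset.mem_image_of_mem _ (Finset.mem_univ ω)
        exact (Finset.sum_eq_single_of_mem (g a) hga
          (fun y _ hy => if_neg fun hc => hy hc.symm)).trans (if_pos rfl)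
    _ = H p X := rfl

lemma H_comp_inj (X : Ω → α) (g : α → β) (hg : Function.Injective g) :
    H p (fun ω => g (X ω)) = H p X := by
  classical
  have hpr : ∀ a, pr p (fun ω => g (X ω)) (g a) = pr p X a := fun a =>
    Finset.sum_congr rfl fun ω _ => ite_iff ⟨fun h => hg h, fun h => congrArg g h⟩
  rw [H, H]
  have himg : (Finset.univ.image fun ω => g (X ω)) = (Finset.univ.image X).image g := by
    rw [Finset.image_image]
    rfl
  rw [himg, Finset.sum_image (fun a _ b _ h => hg h)]
  exact Finset.sum_congr rfl fun a _ => by rw [hpr a]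

lemma pr_congr (X Y : Ω → α) (h : ∀ ω, p ω ≠ 0 → X ω = Y ω) (a : α) :
    pr p X a = pr p Y a := by
  refine Finset.sum_congr rfl fun ω _ => ?_
  by_cases hω : p ω = 0
  · by_cases h1 : X ω = a <;> by_cases h2 : Y ω = a <;> simp [h1, h2, hω]
  · rw [h ω hω]

lemma H_congr (X Y : Ω → α) (h : ∀ ω, p ω ≠ 0 → X ω = Y ω) : H p X = H p Y := by
  classical
  rw [H_eq_sum p X (Finset.univ.image X ∪ Finset.univ.image Y)
      (fun ω => Finset.mem_union_left _ (Finset.mem_image_of_mem X (Finset.mem_univ ω))),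
    H_eq_sum p Y (Finset.univ.image X ∪ Finset.univ.image Y)
      (fun ω => Finset.mem_union_right _ (Finset.mem_image_of_mem Y (Finset.mem_univ ω)))]
  exact Finset.sum_congr rfl fun a _ => by rw [pr_congr p X Y h a]

lemma H_pair_of_fun (A : Ω → α) (B : Ω → β) (g : β → α)
    (h : ∀ ω, p ω ≠ 0 → A ω = g (B ω)) :
    H p (fun ω => (A ω, B ω)) = H p B := by
  have h1 : H p (fun ω => (A ω, B ω)) = H p (fun ω => (g (B ω), B ω)) :=
    H_congr p _ _ fun ω hω => by rw [h ω hω]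
  rw [h1]
  exact H_comp_inj p B (fun b => (g b, b)) fun b b' e => congrArg Prod.snd e

lemma exists_fun_of_Hc_eq_zero [Nonempty α] (hp : ∀ ω, 0 ≤ p ω)
    (A : Ω → α) (B : Ω → β) (h : Hc p A B = 0) :
    ∃ g : β → α, ∀ ω, p ω ≠ 0 → A ω = g (B ω) := by
  classical
  set sA := Finset.univ.image A with hsA
  set sB := Finset.univ.image B with hsB
  have hmemA : ∀ ω, A ω ∈ sA := fun ω => Finset.mem_image_of_mem A (Finset.mem_univ ω)
  have hmemB : ∀ ω, B ω ∈ sB := fun ω => Finset.mem_image_of_mem B (Finset.mem_univ ω)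
  set P : α → β → ℝ := fun a b => pr p (fun ω => (A ω, B ω)) (a, b) with hPdef
  have hPnn : ∀ a b, 0 ≤ P a b := fun a b => pr_nonneg p hp _ _
  have hmarg : ∀ b, pr p B b = ∑ a ∈ sA, P a b := fun b => pr_marginal p A B sA hmemA b
  have hHpair : H p (fun ω => (A ω, B ω)) = ∑ b ∈ sB, ∑ a ∈ sA, Real.negMulLog (P a b) := by
    rw [H_eq_sum p _ (sA ×ˢ sB)
      (fun ω => Finset.mem_product.2 ⟨hmemA ω, hmemB ω⟩), Finset.sum_product_right]
  have hHB : H p B = ∑ b ∈ sB, Real.negMulLog (∑ a ∈ sA, P a b) := by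
    rw [H]
    exact Finset.sum_congr rfl fun b _ => by rw [hmarg b]
  have hdiff : ∑ b ∈ sB,
      (∑ a ∈ sA, Real.negMulLog (P a b) - Real.negMulLog (∑ a ∈ sA, P a b)) = 0 := by
    rw [Finset.sum_sub_distrib, ← hHpair, ← hHB]
    have := h
    rw [Hc] at this
    linarith
  have hterm : ∀ b ∈ sB,
      ∑ a ∈ sA, Real.negMulLog (P a b) = Real.negMulLog (∑ a ∈ sA, P a b) := by
    intro b hb
    have h0 := (Finset.sum_eq_zero_iff_of_nonneg (fun b' _ => by
      have := negMulLog_sum_le sA (fun a => P a b') (fun a _ => hPnn a b')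
      linarith)).1 hdiff b hb
    linarith
  have key : ∀ b ∈ sB, ∀ a ∈ sA, ∀ a' ∈ sA, a ≠ a' → P a b ≠ 0 → P a' b = 0 :=
    fun b hb a ha a' ha' hne hPa =>
      negMulLog_sum_eq sA (fun x => P x b) (fun a _ => hPnn a b) (hterm b hb) ha ha' hne hPa
  refine ⟨fun b => if hb : ∃ a, P a b ≠ 0 then hb.choose else Classical.arbitrary α,
    fun ω hω => ?_⟩
  have hpos : P (A ω) (B ω) ≠ 0 := by
    have h1 := le_pr p hp (fun ω => (A ω, B ω)) ω
    have h2 := (hp ω).lt_of_ne (Ne.symm hω)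
    exact ne_of_gt (lt_of_lt_of_le h2 h1)
  have hb : ∃ a, P a (B ω) ≠ 0 := ⟨A ω, hpos⟩
  show A ω = if hb : ∃ a, P a (B ω) ≠ 0 then hb.choose else Classical.arbitrary α
  rw [dif_pos hb]
  have hcs : P hb.choose (B ω) ≠ 0 := hb.choose_spec
  have hmem : hb.choose ∈ sA := by
    by_contra hmem
    refine hcs (pr_eq_zero p _ _ fun ω' hc => hmem ?_)
    have h1 : A ω' = hb.choose := congrArg Prod.fst hc
    exact h1 ▸ hmemA ω'
  by_contra hne
  exact hcs (key (B ω) (hmemB ω) (A ω) (hmemA ω) hb.choose hmem hne hpos)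

lemma pr_indep_comp (A : Ω → α) (B : Ω → β) (g : β → γ)
    (h : ∀ a b, pr p (fun ω => (A ω, B ω)) (a, b) = pr p A a * pr p B b) (a : α) (c : γ) :
    pr p (fun ω => (A ω, g (B ω))) (a, c) = pr p A a * pr p (fun ω => g (B ω)) c := by
  classical
  rw [pr_pair_comp_snd p A B g (Finset.univ.image B)
      (fun ω => Finset.mem_image_of_mem _ (Finset.mem_univ ω)) a c,
    pr_map p B g (Finset.univ.image B)
      (fun ω => Finset.mem_image_of_mem _ (Finset.mem_univ ω)) c,
    Finset.mul_sum]
  refine Finset.sum_congr rfl fun b _ => ?_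
  rw [h a b]
  split <;> simp

end Toolbox2

end ToolboxOuter

set_option maxHeartbeats 1600000 in
/-- **Lemma 2.** For any secure aggregation scheme for `(F, G)` and any user `u`
whose column of `F` is nonzero, user `u`'s message has at least `L · log q` of
entropy even conditioned on all other users' inputs and keys. -/

theorem message_entropy_conditional_lower_bound
    {𝔽 : Type} [Field 𝔽] [Fintype 𝔽] {K M N : ℕ} {L : ℕ}
    (hK : 1 ≤ K) (hL : 1 ≤ L)
    (F : Matrix (Fin M) (Fin K) 𝔽) (G : Matrix (Fin N) (Fin K) 𝔽)
    (hF : F.rank = M) (hG : G.rank = N)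
    (Ω : Type) [Fintype Ω] (κ : Fin K → Type) (σ : Type) (χ : Fin K → Type)
    (S : Scheme 𝔽 L F G Ω κ σ χ)
    (u : Fin K) (hu : ∃ i : Fin M, F i u ≠ 0) :
    (L : ℝ) * Real.log (Fintype.card 𝔽)
      ≤ Hc S.p (S.X u)
          (fun ω => fun k : {k : Fin K // k ≠ u} => (S.W ω k.1, S.Z k.1 ω)) := by
  classical
  obtain ⟨i, hFi⟩ := hu
  have hp0 : ∀ ω, 0 ≤ S.p ω := S.p_nonneg
  have hp1 : ∑ ω, S.p ω = 1 := S.p_sum_one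
  set C : Ω → (∀ k : {k : Fin K // k ≠ u}, (Fin L → 𝔽) × κ k.1) :=
    fun ω => fun k : {k : Fin K // k ≠ u} => (S.W ω k.1, S.Z k.1 ω) with hCdef
  set mk : (Fin L → 𝔽) → (∀ k : {k : Fin K // k ≠ u}, (Fin L → 𝔽) × κ k.1) →
      Matrix (Fin K) (Fin L) 𝔽 :=
    fun w c => Matrix.of (fun k j => if h : k = u then w j else (c ⟨k, h⟩).1 j) with hmk
  have hmkW : ∀ ω, mk (S.W ω u) (C ω) = S.W ω := by
    intro ω
    ext k j
    by_cases h : k = u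
    · subst h; simp [hmk]
    · simp [hmk, h, hCdef]
  set Z' : Ω → (∀ k : {k : Fin K // k ≠ u}, κ k.1) :=
    fun ω => fun k : {k : Fin K // k ≠ u} => S.Z k.1 ω with hZ'
  set ZZ : Ω → ((∀ k, κ k) × σ) := fun ω => ((fun k => S.Z k ω), S.Zsrc ω) with hZZ
  have hZZmem : ∀ ω, ZZ ω ∈ Finset.univ.image ZZ :=
    fun ω => Finset.mem_image_of_mem _ (Finset.mem_univ ω)
  -- independence of W and Z'
  have hindep : ∀ (m : Matrix (Fin K) (Fin L) 𝔽) (z : ∀ k : {k : Fin K // k ≠ u}, κ k.1),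
      pr S.p (fun ω => (S.W ω, Z' ω)) (m, z) = pr S.p S.W m * pr S.p Z' z :=
    fun m z => pr_indep_comp S.p S.W ZZ
      (fun ζ => fun k : {k : Fin K // k ≠ u} => ζ.1 k.1) S.indep m z
  -- rewriting (W_u, C) events as (W, Z') events
  have hWC : ∀ (w : Fin L → 𝔽) (c : ∀ k : {k : Fin K // k ≠ u}, (Fin L → 𝔽) × κ k.1),
      pr S.p (fun ω => (S.W ω u, C ω)) (w, c)
        = pr S.p (fun ω => (S.W ω, Z' ω)) (mk w c, fun k => (c k).2) := by
    intro w c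
    refine Finset.sum_congr rfl fun ω _ => ?_
    refine ite_iff ?_
    rw [pair_eq_iff, pair_eq_iff]
    constructor
    · rintro ⟨h1, h2⟩
      have h1' : S.W ω u = w := h1
      have h2' : C ω = c := h2
      constructor
      · show S.W ω = mk w c
        ext k j
        by_cases h : k = u
        · subst h
          simpa [hmk] using congrFun h1' j
        · simp only [hmk, Matrix.of_apply, dif_neg h]
          exact congrFun (congrArg Prod.fst (congrFun h2' ⟨k, h⟩)) j
      · show Z' ω = fun k => (c k).2
        funext k
        exact congrArg Prod.snd (congrFun h2' k)
    · rintro ⟨h1, h2⟩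
      have h1' : S.W ω = mk w c := h1
      have h2' : Z' ω = fun k => (c k).2 := h2
      constructor
      · show S.W ω u = w
        funext j
        rw [h1']
        simp [hmk]
      · show C ω = c
        funext k
        refine Prod.ext ?_ ?_
        · show S.W ω k.1 = (c k).1
          funext j
          rw [h1']
          simp [hmk, k.2]
        · exact congrFun h2' k
  have hcL0 : ((Fintype.card (Fin L → 𝔽) : ℝ)) ≠ 0 :=
    Nat.cast_ne_zero.2 Fintype.card_ne_zero
  -- the key conditional-uniformity fact
  have hkey : ∀ (w : Fin L → 𝔽) (c : ∀ k : {k : Fin K // k ≠ u}, (Fin L → 𝔽) × κ k.1),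
      pr S.p (fun ω => (S.W ω u, C ω)) (w, c)
        = (Fintype.card (Fin L → 𝔽) : ℝ)⁻¹ * pr S.p C c := by
    intro w c
    have hcc : ∀ w' : Fin L → 𝔽, pr S.p (fun ω => (S.W ω u, C ω)) (w', c)
        = (Fintype.card (Matrix (Fin K) (Fin L) 𝔽) : ℝ)⁻¹ * pr S.p Z' (fun k => (c k).2) := by
      intro w'
      rw [hWC w' c, hindep, S.W_unif]
    have hmargC : pr S.p C c = ∑ w' ∈ (Finset.univ : Finset (Fin L → 𝔽)),
        pr S.p (fun ω => (S.W ω u, C ω)) (w', c) :=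
      pr_marginal S.p (fun ω => S.W ω u) C Finset.univ (fun ω => Finset.mem_univ _) c
    rw [hmargC, Finset.sum_congr rfl (fun w' _ => hcc w'), Finset.sum_const, hcc w,
      Finset.card_univ, nsmul_eq_mul, ← mul_assoc, inv_mul_cancel₀ hcL0, one_mul]
  have himgC : ∀ ω, C ω ∈ Finset.univ.image C :=
    fun ω => Finset.mem_image_of_mem _ (Finset.mem_univ ω)
  -- exact computation of Hc(W_u | C)
  have hHcWu : Hc S.p (fun ω => S.W ω u) C = (L : ℝ) * Real.log (Fintype.card 𝔽) := by
    set cL := ((Fintype.card (Fin L → 𝔽) : ℝ)) with hcLdef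
    have hH1 : H S.p (fun ω => (S.W ω u, C ω))
        = ∑ w : Fin L → 𝔽, ∑ c ∈ Finset.univ.image C,
            Real.negMulLog (cL⁻¹ * pr S.p C c) := by
      rw [H_eq_sum S.p _ ((Finset.univ : Finset (Fin L → 𝔽)) ×ˢ Finset.univ.image C)
        (fun ω => Finset.mem_product.2 ⟨Finset.mem_univ _, himgC ω⟩), Finset.sum_product]
      exact Finset.sum_congr rfl fun w _ => Finset.sum_congr rfl fun c _ => by
        rw [hkey w c]
    have hsum1 : ∑ c ∈ Finset.univ.image C, pr S.p C c = 1 := by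
      rw [pr_sum S.p C _ himgC, hp1]
    have hHC : H S.p C = ∑ c ∈ Finset.univ.image C, Real.negMulLog (pr S.p C c) :=
      H_eq_sum S.p C _ himgC
    have hinner : ∑ c ∈ Finset.univ.image C, Real.negMulLog (cL⁻¹ * pr S.p C c)
        = Real.negMulLog cL⁻¹ + cL⁻¹ * H S.p C := by
      rw [Finset.sum_congr rfl fun c _ => Real.negMulLog_mul cL⁻¹ (pr S.p C c),
        Finset.sum_add_distrib, ← Finset.sum_mul, hsum1, one_mul, ← Finset.mul_sum, hHC]
    have hlog : cL * Real.negMulLog cL⁻¹ = (L : ℝ) * Real.log (Fintype.card 𝔽) := by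
      have h1 : cL * Real.negMulLog cL⁻¹ = Real.log cL := by
        rw [Real.negMulLog, Real.log_inv]
        field_simp
      have hcl : cL = ((Fintype.card 𝔽 : ℝ)) ^ L := by
        rw [hcLdef, Fintype.card_fun, Fintype.card_fin]
        push_cast
        ring
      rw [h1, hcl, Real.log_pow]
    rw [Hc, hH1, Finset.sum_congr rfl fun (w : Fin L → 𝔽) _ => hinner, Finset.sum_const,
      Finset.card_univ, nsmul_eq_mul, ← hcLdef]
    rw [mul_add, ← mul_assoc, mul_inv_cancel₀ hcL0, one_mul]
    rw [add_sub_cancel_right, hlog]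
  -- Part B : H(FW, C) = H(W_u, C)
  have hθinj : Function.Injective
      (fun t : (Fin L → 𝔽) × (∀ k : {k : Fin K // k ≠ u}, (Fin L → 𝔽) × κ k.1) =>
        (F * mk t.1 t.2, t.2)) := by
    rintro ⟨w, c⟩ ⟨w', c'⟩ he
    have h2 : c = c' := congrArg Prod.snd he
    subst h2
    have h1 : F * mk w c = F * mk w' c := congrArg Prod.fst he
    have hw : w = w' := by
      funext j
      have h3 : (F * mk w c) i j = (F * mk w' c) i j := by rw [h1]
      rw [Matrix.mul_apply, Matrix.mul_apply] at h3
      have h4 : ∀ k ∈ Finset.univ.erase u,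
          F i k * mk w c k j = F i k * mk w' c k j := by
        intro k hk
        have hku := Finset.ne_of_mem_erase hk
        simp [hmk, hku]
      have h5 : F i u * mk w c u j + ∑ k ∈ Finset.univ.erase u, F i k * mk w c k j
          = F i u * mk w' c u j + ∑ k ∈ Finset.univ.erase u, F i k * mk w' c k j := by
        rw [Finset.add_sum_erase Finset.univ (fun k => F i k * mk w c k j)
            (Finset.mem_univ u),
          Finset.add_sum_erase Finset.univ (fun k => F i k * mk w' c k j)
            (Finset.mem_univ u)]
        exact h3
      rw [Finset.sum_congr rfl h4] at h5
      have h6 : F i u * mk w c u j = F i u * mk w' c u j := add_right_cancel h5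
      have h7 : mk w c u j = mk w' c u j := mul_left_cancel₀ hFi h6
      simpa [hmk] using h7
    rw [hw]
  have hHAC : H S.p (fun ω => (F * S.W ω, C ω)) = H S.p (fun ω => (S.W ω u, C ω)) := by
    have h1 : H S.p (fun ω => (F * S.W ω, C ω))
        = H S.p (fun ω =>
            (fun t : (Fin L → 𝔽) × (∀ k : {k : Fin K // k ≠ u}, (Fin L → 𝔽) × κ k.1) =>
              (F * mk t.1 t.2, t.2)) ((S.W ω u, C ω))) := by
      refine H_congr S.p _ _ fun ω _ => ?_
      show (F * S.W ω, C ω) = (F * mk (S.W ω u) (C ω), C ω)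
      rw [hmkW ω]
    rw [h1]
    exact H_comp_inj S.p (fun ω => (S.W ω u, C ω)) _ hθinj
  -- Part C : H(FW, C) ≤ H(X_u, C) via correctness and determinism
  haveI : Nonempty (Matrix (Fin M) (Fin L) 𝔽) := ⟨0⟩
  obtain ⟨g, hg⟩ := exists_fun_of_Hc_eq_zero S.p hp0
    (fun ω => F * S.W ω) (fun ω => fun k => S.X k ω) S.correct
  choose f hf using S.X_det
  set φ : χ u × (∀ k : {k : Fin K // k ≠ u}, (Fin L → 𝔽) × κ k.1) → (∀ k, χ k) :=
    fun t k => if h : k = u then h.symm ▸ t.1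
      else f k (t.2 ⟨k, h⟩).1 (t.2 ⟨k, h⟩).2 with hφ
  have hφX : ∀ ω, (fun k => S.X k ω) = φ (S.X u ω, C ω) := by
    intro ω
    funext k
    by_cases h : k = u
    · subst h
      simp [hφ]
    · simp only [hφ, dif_neg h]
      exact hf k ω
  have hHle : H S.p (fun ω => (F * S.W ω, C ω)) ≤ H S.p (fun ω => (S.X u ω, C ω)) := by
    have h1 : H S.p (fun ω => (F * S.W ω, C ω))
        = H S.p (fun ω =>
            (fun t : χ u × (∀ k : {k : Fin K // k ≠ u}, (Fin L → 𝔽) × κ k.1) =>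
              (g (φ t), t.2)) ((S.X u ω, C ω))) := by
      refine H_congr S.p _ _ fun ω hω => ?_
      show (F * S.W ω, C ω) = (g (φ (S.X u ω, C ω)), C ω)
      rw [← hφX ω, ← hg ω hω]
    rw [h1]
    exact H_comp_le S.p hp0 (fun ω => (S.X u ω, C ω))
      (fun t : χ u × (∀ k : {k : Fin K // k ≠ u}, (Fin L → 𝔽) × κ k.1) => (g (φ t), t.2))
  -- conclusion
  calc (L : ℝ) * Real.log (Fintype.card 𝔽)
      = Hc S.p (fun ω => S.W ω u) C := hHcWu.symm
    _ = H S.p (fun ω => (S.W ω u, C ω)) - H S.p C := rfl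
    _ = H S.p (fun ω => (F * S.W ω, C ω)) - H S.p C := by rw [hHAC]
    _ ≤ H S.p (fun ω => (S.X u ω, C ω)) - H S.p C := by linarith [hHle]
    _ = Hc S.p (S.X u) C := rfl

end SecAgg
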